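/- arXiv:1909.13491 — 5 statements merged into one kernel-verified Lean document; each statement's English description precedes it below -/
import Mathlib

section
/- Let n and D be integers. There exists an integral binary quadratic form f(x,y) = A x^2 + 2 B x y + C y^2 (with A, B, C ∈ ℤ) of determinant A C − B^2 = D such that the equation f(x,y) = n has a primitive integer solution, if and only if the congruence −z^2 ≡ D (mod n) has an integer solution, i.e., there exists z ∈ ℤ with n ∣ z^2 + D. -/
/-!
A primitive vector `(x, y)` with `u x + v y = 1` is the first column of the unimodular matrix
`[[x, -v], [y, u]]`. Substituting it into `f` gives an equivalent form `n X² + 2 B' X Y + C' Y²`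
of the same determinant `D = n C' - B'²`, so `n ∣ B'² + D`. Conversely, if `n c = z² + D`, the form
`n X² + 2 z X Y + c Y²` has determinant `D` and represents `n` primitively at `(1, 0)`.
-/

theorem binaryForm_det_substitution {R : Type*} [CommRing R] (A B C x y u v : R) :
    (A * x ^ 2 + 2 * B * x * y + C * y ^ 2) * (A * v ^ 2 - 2 * B * u * v + C * u ^ 2) -
        (-A * x * v + B * (x * u - y * v) + C * y * u) ^ 2 =
      (u * x + v * y) ^ 2 * (A * C - B ^ 2) := by
  ring

theorem exists_dvd_sq_add_det_of_isCoprime {R : Type*} [CommRing R] (A B C : R) {x y : R}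
    (hxy : IsCoprime x y) :
    ∃ z : R, A * x ^ 2 + 2 * B * x * y + C * y ^ 2 ∣ z ^ 2 + (A * C - B ^ 2) := by
  obtain ⟨u, v, huv⟩ := hxy
  refine ⟨-A * x * v + B * (x * u - y * v) + C * y * u,
    A * v ^ 2 - 2 * B * u * v + C * u ^ 2, ?_⟩
  linear_combination (binaryForm_det_substitution A B C x y u v).symm -
    (u * x + v * y + 1) * (A * C - B ^ 2) * huv

/-- An integral binary quadratic form `A x² + 2 B x y + C y²` of determinant
`A C − B² = D` represents `n` primitively iff `−z² ≡ D (mod n)` is solvable. -/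
theorem quadratic_form_primitive_representation_iff (n D : ℤ) :
    (∃ A B C x y : ℤ, A * C - B ^ 2 = D ∧
      A * x ^ 2 + 2 * B * x * y + C * y ^ 2 = n ∧ IsCoprime x y) ↔
    ∃ z : ℤ, n ∣ z ^ 2 + D := by
  constructor
  · rintro ⟨A, B, C, x, y, rfl, rfl, hxy⟩
    exact exists_dvd_sq_add_det_of_isCoprime A B C hxy
  · rintro ⟨z, c, hc⟩
    exact ⟨n, z, c, 1, 0, by linarith, by ring, isCoprime_one_left⟩
end

section
/- For every pair of coprime positive integers p and q there exist integers a₁, a₂, l, t₁, t₂ such that p·(t₁·t₂ − l^2) + q·(t₂·a₁^2 − 2·l·a₁·a₂ + t₁·a₂^2) = 1 or = −1; equivalently, the determinant of the 3×3 integer matrix with rows (p, −q·a₁, −q·a₂), (a₁, t₁, l), (a₂, l, t₂) equals ±1. (This is the algebraic content of Theorem 2: every lens space L(p,q) is a closure of a homology cobordism over the planar surface Σ_{0,3}.) -/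
/-!
With `a₁ = 1` and `a₂ = 0` the determinant is `t₂ (p t₁ + q) - p l²`, so it suffices to find
`N ≡ q (mod p)` and `l` with `N ∣ p l² ∓ 1`. Dirichlet's theorem gives a prime `r > p` with
`r ≡ 3 (mod 4)` and `r ≡ ±q (mod p)`; take `N = ±r`. As `-1` is not a square modulo `r`,
one of `p` and `-p` is a nonzero square modulo `r`, which yields `l`.
-/

theorem FiniteField.isSquare_or_isSquare_neg {F : Type*} [Field F] [Fintype F]
    (hF : Fintype.card F % 4 = 3) (x : F) : IsSquare x ∨ IsSquare (-x) := by
  classical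
  by_contra! h
  obtain ⟨hx, hnx⟩ := h
  have hneg_one : ¬IsSquare (-1 : F) := by simpa [FiniteField.isSquare_neg_one_iff]
  have := quadraticChar_neg_one_iff_not_isSquare.mpr hnx
  rw [neg_eq_neg_one_mul, map_mul, quadraticChar_neg_one_iff_not_isSquare.mpr hneg_one,
    quadraticChar_neg_one_iff_not_isSquare.mpr hx] at this
  norm_num at this

theorem FiniteField.exists_mul_sq_eq_one_or_neg_one {F : Type*} [Field F] [Fintype F]
    (hF : Fintype.card F % 4 = 3) {x : F} (hx : x ≠ 0) : ∃ y : F, x * y ^ 2 = 1 ∨ x * y ^ 2 = -1 := by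
  rcases isSquare_or_isSquare_neg hF x with ⟨c, hc⟩ | ⟨c, hc⟩
  · have hc0 : c ≠ 0 := by rintro rfl; simp_all
    exact ⟨c⁻¹, .inl (by rw [hc]; field_simp)⟩
  · have hc0 : c ≠ 0 := by rintro rfl; simp_all
    refine ⟨c⁻¹, .inr ?_⟩
    rw [← neg_neg x, hc]; field_simp

theorem ZMod.exists_dvd_mul_sq_sub_one_or_add_one {r : ℕ} [Fact r.Prime] (hr : r % 4 = 3)
    {a : ℤ} (ha : (a : ZMod r) ≠ 0) : ∃ l : ℤ, (r : ℤ) ∣ a * l ^ 2 - 1 ∨ (r : ℤ) ∣ a * l ^ 2 + 1 := by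
  obtain ⟨y, hy⟩ := FiniteField.exists_mul_sq_eq_one_or_neg_one (by rwa [ZMod.card]) ha
  obtain ⟨l, rfl⟩ := ZMod.intCast_surjective y
  refine ⟨l, ?_⟩
  simp only [← ZMod.intCast_zmod_eq_zero_iff_dvd]
  push_cast
  rcases hy with hy | hy
  · exact .inl (by rw [hy, sub_self])
  · exact .inr (by rw [hy, neg_add_cancel])

theorem Int.exists_emod_four_eq_three_modEq_or_neg {p q : ℤ} (hpq : IsCoprime q p) :
    ∃ n : ℤ, IsCoprime n (4 * p) ∧ n % 4 = 3 ∧ (n ≡ q [ZMOD p] ∨ n ≡ -q [ZMOD p]) := by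
  have hcop4 (n : ℤ) (hn : n % 4 = 3) : IsCoprime n 4 := ⟨3, -(3 * (n / 4) + 2), by omega⟩
  have hpar : q % 2 = 1 ∨ p % 2 = 1 := by
    by_contra! h
    simpa [Int.isUnit_iff] using hpq.isUnit_of_dvd' (by omega : (2 : ℤ) ∣ q) (by omega : (2 : ℤ) ∣ p)
  obtain ⟨j, hj⟩ | hneg : (∃ j : ℤ, (q + p * j) % 4 = 3) ∨ -q % 4 = 3 := by
    have hp4 : p % 4 = 0 ∨ p % 4 = 1 ∨ p % 4 = 2 ∨ p % 4 = 3 := by omega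
    have : q % 4 = 3 ∨ (q + p) % 4 = 3 ∨ (q + 2 * p) % 4 = 3 ∨ (q + 3 * p) % 4 = 3 ∨ -q % 4 = 3 := by
      rcases hp4 with h | h | h | h <;> omega
    rcases this with h | h | h | h | h
    exacts [.inl ⟨0, by omega⟩, .inl ⟨1, by omega⟩, .inl ⟨2, by omega⟩, .inl ⟨3, by omega⟩, .inr h]
  · exact ⟨q + p * j, (hcop4 _ hj).mul_right (hpq.add_mul_left_left j), hj,
      .inl (Int.modEq_iff_dvd.mpr ⟨-j, by ring⟩)⟩
  · exact ⟨-q, (hcop4 _ hneg).mul_right hpq.neg_left, hneg, .inr rfl⟩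

theorem Nat.exists_prime_gt_mod_four_eq_three_modEq_or_neg {p : ℕ} {q : ℤ} (hp : 0 < p)
    (hpq : IsCoprime q p) :
    ∃ r : ℕ, r.Prime ∧ p < r ∧ r % 4 = 3 ∧ ((r : ℤ) ≡ q [ZMOD p] ∨ (r : ℤ) ≡ -q [ZMOD p]) := by
  obtain ⟨n, hn, hn4, hnq⟩ := Int.exists_emod_four_eq_three_modEq_or_neg hpq
  obtain ⟨r, hpr, hr, hrn⟩ :=
    Nat.forall_exists_prime_gt_and_zmodEq p (q := 4 * p) (by omega) (by push_cast; exact hn)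
  push_cast at hrn
  have hr4 : (r : ℤ) ≡ n [ZMOD 4] := hrn.of_mul_right _
  unfold Int.ModEq at hr4
  refine ⟨r, hr, hpr, by omega, ?_⟩
  exact hnq.imp (hrn.of_mul_left _).trans (hrn.of_mul_left _).trans

theorem exists_det_eq_one_or_neg_one_of_modEq_of_dvd {p q N k : ℤ} (hN : N ≡ q [ZMOD p])
    (hk : N ∣ p * k ^ 2 - 1 ∨ N ∣ p * k ^ 2 + 1) :
    ∃ a₁ a₂ l t₁ t₂ : ℤ,
      p * (t₁ * t₂ - l ^ 2) + q * (t₂ * a₁ ^ 2 - 2 * l * a₁ * a₂ + t₁ * a₂ ^ 2) = 1 ∨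
      p * (t₁ * t₂ - l ^ 2) + q * (t₂ * a₁ ^ 2 - 2 * l * a₁ * a₂ + t₁ * a₂ ^ 2) = -1 := by
  obtain ⟨t₁, ht₁⟩ := hN.dvd
  rcases hk with ⟨t₂, ht₂⟩ | ⟨t₂, ht₂⟩
  · exact ⟨1, 0, k, -t₁, t₂, .inr (by linear_combination t₂ * ht₁ - ht₂)⟩
  · exact ⟨1, 0, k, -t₁, t₂, .inl (by linear_combination t₂ * ht₁ - ht₂)⟩

theorem lens_space_sigma03_realizable_general (p q : ℕ) (hp : 0 < p)
    (hpq : Nat.Coprime p q) :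
    ∃ a₁ a₂ l t₁ t₂ : ℤ,
      (p : ℤ) * (t₁ * t₂ - l ^ 2) + (q : ℤ) * (t₂ * a₁ ^ 2 - 2 * l * a₁ * a₂ + t₁ * a₂ ^ 2) = 1 ∨
      (p : ℤ) * (t₁ * t₂ - l ^ 2) + (q : ℤ) * (t₂ * a₁ ^ 2 - 2 * l * a₁ * a₂ + t₁ * a₂ ^ 2) = -1 := by
  obtain ⟨r, hr, hpr, hr4, hrq⟩ :=
    Nat.exists_prime_gt_mod_four_eq_three_modEq_or_neg hp (Nat.isCoprime_iff_coprime.mpr hpq.symm)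
  have := Fact.mk hr
  have hp_ne_zero : ((p : ℤ) : ZMod r) ≠ 0 := by
    rw [Int.cast_natCast, Ne, ZMod.natCast_eq_zero_iff]
    exact Nat.not_dvd_of_pos_of_lt hp hpr
  obtain ⟨l, hl⟩ := ZMod.exists_dvd_mul_sq_sub_one_or_add_one hr4 hp_ne_zero
  rcases hrq with hrq | hrq
  · exact exists_det_eq_one_or_neg_one_of_modEq_of_dvd hrq hl
  · exact exists_det_eq_one_or_neg_one_of_modEq_of_dvd (N := -r) (by simpa using hrq.neg)
      (by simpa only [neg_dvd] using hl)

/-- Theorem 2 (algebraic form): for coprime positive `p`, `q` the determinant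
`|[p, −q a₁, −q a₂; a₁, t₁, l; a₂, l, t₂]| = ±1` has an integer solution. -/
theorem lens_space_sigma03_realizable (p q : ℕ) (hp : 0 < p) (hq : 0 < q)
    (hpq : Nat.Coprime p q) :
    ∃ a₁ a₂ l t₁ t₂ : ℤ,
      (p : ℤ) * (t₁ * t₂ - l ^ 2) + (q : ℤ) * (t₂ * a₁ ^ 2 - 2 * l * a₁ * a₂ + t₁ * a₂ ^ 2) = 1 ∨
      (p : ℤ) * (t₁ * t₂ - l ^ 2) + (q : ℤ) * (t₂ * a₁ ^ 2 - 2 * l * a₁ * a₂ + t₁ * a₂ ^ 2) = -1 :=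
  lens_space_sigma03_realizable_general p q hp hpq
end

section
/- Let D and M be integers with M ≠ 0. There exist integers t₁, t₂, l, a₁, a₂ with t₁·t₂ − l^2 = D and t₂·a₁^2 − 2·l·a₁·a₂ + t₁·a₂^2 = M if and only if there exist integers w ≠ 0 and z such that w^2 ∣ M and (M / w^2) ∣ z^2 + D. -/
/-! A primitive representation `g(x, y) = m`, completed by a Bézout pair `u x + v y = 1` to a
matrix of `SL₂(ℤ)`, turns `g` into an equivalent form `m X² - 2b X Y + c Y²` of the same
determinant, so `b² + D = m c`. A general representation is `w²` times a primitive one.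
Conversely, `z² + D = m k` makes `m x² - 2 z x y + k y²` a form of determinant `D`
with `g(w, 0) = w² m`. -/

theorem sq_add_det_dvd_of_isCoprime {x y : ℤ} (hxy : IsCoprime x y) (t₁ t₂ l : ℤ) :
    ∃ z : ℤ, t₂ * x ^ 2 - 2 * l * x * y + t₁ * y ^ 2 ∣ z ^ 2 + (t₁ * t₂ - l ^ 2) := by
  obtain ⟨u, v, huv⟩ := hxy
  refine ⟨t₂ * x * v + l * (x * u - v * y) - t₁ * y * u,
    t₂ * v ^ 2 + 2 * l * u * v + t₁ * u ^ 2, ?_⟩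
  linear_combination -(t₁ * t₂ - l ^ 2) * (u * x + v * y + 1) * huv

theorem exists_eq_mul_isCoprime {a b : ℤ} (hab : a ≠ 0 ∨ b ≠ 0) :
    ∃ w x y : ℤ, w ≠ 0 ∧ IsCoprime x y ∧ a = x * w ∧ b = y * w := by
  obtain ⟨g, x, y, hg, hxy, rfl, rfl⟩ := Int.exists_gcd_one' (Int.gcd_pos_iff.mpr hab)
  exact ⟨g, x, y, by positivity, Int.isCoprime_iff_gcd_eq_one.mpr hxy, rfl, rfl⟩

/-- Representing `M ≠ 0` by a binary quadratic form of determinant `D` is possible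
iff `w² ∣ M` and `−z² ≡ D (mod M / w²)` are solvable. -/
theorem represent_iff_congruence (D M : ℤ) (hM : M ≠ 0) :
    (∃ t₁ t₂ l a₁ a₂ : ℤ, t₁ * t₂ - l ^ 2 = D ∧
      t₂ * a₁ ^ 2 - 2 * l * a₁ * a₂ + t₁ * a₂ ^ 2 = M) ↔
    ∃ w z : ℤ, w ≠ 0 ∧ w ^ 2 ∣ M ∧ (M / w ^ 2) ∣ z ^ 2 + D := by
  constructor
  · rintro ⟨t₁, t₂, l, a₁, a₂, rfl, rfl⟩
    have ha : a₁ ≠ 0 ∨ a₂ ≠ 0 := by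
      by_contra! h
      simp [h.1, h.2] at hM
    obtain ⟨w, x, y, hw, hxy, rfl, rfl⟩ := exists_eq_mul_isCoprime ha
    obtain ⟨z, hz⟩ := sq_add_det_dvd_of_isCoprime hxy t₁ t₂ l
    have hscale : t₂ * (x * w) ^ 2 - 2 * l * (x * w) * (y * w) + t₁ * (y * w) ^ 2 =
        w ^ 2 * (t₂ * x ^ 2 - 2 * l * x * y + t₁ * y ^ 2) := by ring
    refine ⟨w, z, hw, ⟨_, hscale⟩, ?_⟩
    rwa [hscale, Int.mul_ediv_cancel_left _ (pow_ne_zero 2 hw)]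
  · rintro ⟨w, z, hw, ⟨m, rfl⟩, hz⟩
    rw [Int.mul_ediv_cancel_left _ (pow_ne_zero 2 hw)] at hz
    obtain ⟨k, hk⟩ := hz
    exact ⟨k, m, z, w, 0, by linear_combination -hk, by ring⟩
end

section
/- Let p, q, r, s be positive integers with p·s − q·r = 1. Then there exists a nonnegative integer k such that either q + k·p is prime and q + k·p ≡ 3 (mod 4), or r + k·p is prime and r + k·p ≡ 3 (mod 4). -/
/-!
Since `q r ≡ -1 (mod p)`, modulo `g = gcd(p, 4)` one of `q`, `r` is `≡ 3`: in `ℤ/g` with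
`g ∣ 4`, a product equal to `-1` has a factor equal to `-1 = 3`. For that `t`, the congruences
`x ≡ t (mod p)` and `x ≡ 3 (mod 4)` are compatible, so by the Chinese remainder theorem they
cut out a residue class of units modulo `lcm(p, 4)`, which contains a prime `> t` by Dirichlet.
-/

theorem Nat.exists_prime_gt_modEq_modEq {m n a b : ℕ} (hm : m ≠ 0) (hn : n ≠ 0)
    (ha : a.Coprime m) (hb : b.Coprime n) (hab : a ≡ b [MOD m.gcd n]) (N : ℕ) :
    ∃ P > N, P.Prime ∧ P ≡ a [MOD m] ∧ P ≡ b [MOD n] := by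
  obtain ⟨c, hca, hcb⟩ := Nat.chineseRemainder' hab
  have hc : c.Coprime (m.lcm n) :=
    Nat.Coprime.coprime_dvd_right (Nat.lcm_dvd_mul m n)
      (Nat.Coprime.mul_right (hca.gcd_eq.trans ha) (hcb.gcd_eq.trans hb))
  obtain ⟨P, hPN, hP, hPc⟩ :=
    Nat.forall_exists_prime_gt_and_modEq N (Nat.lcm_ne_zero hm hn) hc
  exact ⟨P, hPN, hP, (hPc.of_dvd (Nat.dvd_lcm_left m n)).trans hca,
    (hPc.of_dvd (Nat.dvd_lcm_right m n)).trans hcb⟩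

theorem Nat.exists_prime_add_mul_mod_four_eq_three {p t : ℕ} (hp : p ≠ 0) (ht : t.Coprime p)
    (h3 : t ≡ 3 [MOD p.gcd 4]) : ∃ k, (t + k * p).Prime ∧ (t + k * p) % 4 = 3 := by
  obtain ⟨P, htP, hP, hPt, hP3⟩ :=
    Nat.exists_prime_gt_modEq_modEq hp four_ne_zero ht (by decide) h3 t
  obtain ⟨k, rfl⟩ := (Nat.modEq_iff_exists_eq_add htP.le).mp hPt.symm
  exact ⟨k, by rwa [mul_comm] at hP, by rw [mul_comm]; exact hP3⟩

theorem ZMod.eq_three_or_eq_three_of_mul_eq_neg_one {g : ℕ} (hg : g ∣ 4) {x y : ZMod g}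
    (h : x * y = -1) : x = 3 ∨ y = 3 := by
  obtain rfl | rfl | rfl : g = 1 ∨ g = 2 ∨ g = 4 := by
    have : g ∈ Nat.divisors 4 := Nat.mem_divisors.mpr ⟨hg, four_ne_zero⟩
    simpa [show Nat.divisors 4 = {1, 2, 4} by decide] using this
  all_goals revert x y; decide

theorem Nat.modEq_three_or_modEq_three_of_dvd_mul_add_one {g q r : ℕ} (hg : g ∣ 4)
    (hqr : g ∣ q * r + 1) : q ≡ 3 [MOD g] ∨ r ≡ 3 [MOD g] := by
  have h : (q : ZMod g) * r = -1 := by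
    rw [eq_neg_iff_add_eq_zero]
    exact_mod_cast (ZMod.natCast_eq_zero_iff _ _).mpr hqr
  simpa [← ZMod.natCast_eq_natCast_iff] using ZMod.eq_three_or_eq_three_of_mul_eq_neg_one hg h

theorem exists_prime_three_mod_four_general (p q r s : ℕ)
    (hp : 0 < p)
    (h : (p : ℤ) * s - q * r = 1) :
    ∃ k : ℕ, (Nat.Prime (q + k * p) ∧ (q + k * p) % 4 = 3) ∨
             (Nat.Prime (r + k * p) ∧ (r + k * p) % 4 = 3) := by
  have hq : q.Coprime p := Nat.isCoprime_iff_coprime.mp ⟨-r, s, by linarith⟩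
  have hr : r.Coprime p := Nat.isCoprime_iff_coprime.mp ⟨-q, s, by linarith⟩
  have hqr : q * r + 1 = p * s := by zify; linarith
  have hg : p.gcd 4 ∣ q * r + 1 := (Nat.gcd_dvd_left p 4).trans ⟨s, hqr⟩
  rcases Nat.modEq_three_or_modEq_three_of_dvd_mul_add_one (Nat.gcd_dvd_right p 4) hg
    with h3 | h3
  · obtain ⟨k, hk⟩ := Nat.exists_prime_add_mul_mod_four_eq_three hp.ne' hq h3
    exact ⟨k, .inl hk⟩
  · obtain ⟨k, hk⟩ := Nat.exists_prime_add_mul_mod_four_eq_three hp.ne' hr h3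
    exact ⟨k, .inr hk⟩

/-- For coprime positive `p, q, r, s` with `p s − q r = 1`, some `q + k p` or
`r + k p` is a prime congruent to `3` mod `4`. -/
theorem exists_prime_three_mod_four (p q r s : ℕ)
    (hp : 0 < p) (hq : 0 < q) (hr : 0 < r) (hs : 0 < s)
    (h : (p : ℤ) * s - q * r = 1) :
    ∃ k : ℕ, (Nat.Prime (q + k * p) ∧ (q + k * p) % 4 = 3) ∨
             (Nat.Prime (r + k * p) ∧ (r + k * p) % 4 = 3) :=
  exists_prime_three_mod_four_general p q r s hp h
end

section
/- Let p, q, r, s be positive integers with p·s − q·r = 1. Then there exist a nonnegative integer k, an integer z, and a sign ε ∈ {1, −1} such that either q + k·p is prime and (q + k·p) ∣ p − ε·z^2, or r + k·p is prime and (r + k·p) ∣ p − ε·z^2. (This establishes that condition (3) of the paper, with w = 1, can always be satisfied, yielding Theorem 2.) -/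
/-!
Pick `c ≡ q (mod p)` coprime to `4p` and `b` with `b c ≡ -1 (mod 4p)`; as `q r ≡ -1 (mod p)`,
also `b ≡ r (mod p)`. The symbol `J(-p | ·)` only depends on its argument modulo `4p`, so
`J(-p | b) J(-p | c) = J(-p | 4p - 1) = -1` and `J(-p | x) = 1` for `x = b` or `x = c`.
Dirichlet's theorem gives a prime `P ≡ x (mod 4p)`, which is `q + k p` or `r + k p`, and
`J(-p | P) = 1` makes `-p` a square modulo `P`. So `ε = -1` always works.
-/

open scoped NumberTheorySymbols

namespace Nat

lemma odd_of_coprime_four_mul {x p : ℕ} (h : x.Coprime (4 * p)) : Odd x :=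
  Nat.coprime_two_right.mp (h.coprime_dvd_right (dvd_mul_of_dvd_left (by norm_num) p))

lemma coprime_four_mul_of_odd {x p : ℕ} (hx : Odd x) (hxp : x.Coprime p) : x.Coprime (4 * p) :=
  Nat.Coprime.mul_right (by simpa using (Nat.coprime_two_right.mpr hx).pow_right 2) hxp

lemma coprime_of_dvd_mul_add_one {b c n : ℕ} (h : n ∣ b * c + 1) : b.Coprime n :=
  Nat.dvd_one.mp <| (Nat.dvd_add_right (dvd_mul_of_dvd_left (Nat.gcd_dvd_left b n) c)).mp
    ((Nat.gcd_dvd_right b n).trans h)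

lemma exists_modEq_coprime_four_mul {q p : ℕ} (h : q.Coprime p) :
    ∃ c, c ≡ q [MOD p] ∧ c.Coprime (4 * p) := by
  rcases q.even_or_odd with hq | hq
  · have hp : Odd p := (h.coprime_dvd_left hq.two_dvd).odd_of_left
    exact ⟨q + p, Nat.add_modEq_right,
      coprime_four_mul_of_odd (hq.add_odd hp) (Nat.coprime_add_self_left.mpr h)⟩
  · exact ⟨q, rfl, coprime_four_mul_of_odd hq h⟩

lemma exists_dvd_mul_add_one {c n : ℕ} [NeZero n] (hc : c.Coprime n) : ∃ b, n ∣ b * c + 1 := by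
  refine ⟨(-(c : ZMod n)⁻¹).val, (ZMod.natCast_eq_zero_iff _ n).mp ?_⟩
  push_cast [ZMod.natCast_zmod_val]
  linear_combination -ZMod.coe_mul_inv_eq_one c hc

lemma modEq_of_dvd_mul_add_one {m b c q r : ℕ} (hbc : m ∣ b * c + 1) (hqr : m ∣ q * r + 1)
    (hcq : c ≡ q [MOD m]) : b ≡ r [MOD m] := by
  have hbc' : ((b * c + 1 : ℕ) : ZMod m) = 0 := (ZMod.natCast_eq_zero_iff _ m).mpr hbc
  have hqr' : ((q * r + 1 : ℕ) : ZMod m) = 0 := (ZMod.natCast_eq_zero_iff _ m).mpr hqr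
  have hcq' : (c : ZMod m) = q := (ZMod.natCast_eq_natCast_iff _ _ _).mpr hcq
  push_cast at hbc' hqr'
  rw [← ZMod.natCast_eq_natCast_iff]
  linear_combination b * hqr' - r * hbc' + b * r * hcq'

lemma exists_prime_add_mul_modEq {n p t x : ℕ} (hn : n ≠ 0) (hpn : p ∣ n)
    (hx : x.Coprime n) (hxt : x ≡ t [MOD p]) :
    ∃ k, (t + k * p).Prime ∧ t + k * p ≡ x [MOD n] := by
  obtain ⟨P, htP, hP, hPx⟩ := Nat.forall_exists_prime_gt_and_modEq t hn hx
  obtain ⟨k, hk⟩ := (Nat.modEq_iff_dvd' htP.le).mp ((hPx.of_dvd hpn).trans hxt).symm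
  obtain rfl : P = t + k * p := by rw [mul_comm, ← hk]; omega
  exact ⟨k, hP, hPx⟩

end Nat

lemma jacobiSym_eq_of_modEq (a : ℤ) {m n : ℕ} (hm : Odd m) (h : m ≡ n [MOD 4 * a.natAbs]) :
    J(a | m) = J(a | n) := by
  have h2 : m % 2 = n % 2 :=
    (show 4 * a.natAbs = 2 * (2 * a.natAbs) by ring) ▸ h |>.of_mul_right _
  have hn : Odd n := Nat.odd_iff.mpr (h2 ▸ Nat.odd_iff.mp hm)
  rw [jacobiSym.mod_right a hm, jacobiSym.mod_right a hn, h]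

lemma jacobiSym_neg_eq_neg_one_of_dvd_add_one {p m : ℕ} (hp : 0 < p) (hm : 4 * p ∣ m + 1) :
    J(-p | m) = -1 := by
  have hn : Odd (4 * p - 1) := Nat.odd_iff.mpr (by omega)
  have hle : 4 * p - 1 ≤ m := by have := Nat.le_of_dvd (by omega) hm; omega
  have hnm : 4 * p - 1 ≡ m [MOD 4 * p] := by
    rw [Nat.modEq_iff_dvd' hle, show m - (4 * p - 1) = m + 1 - 4 * p by omega]
    exact Nat.dvd_sub hm dvd_rfl
  rw [← jacobiSym_eq_of_modEq (-p) hn (by simpa using hnm)]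
  -- `4 · (-p) ≡ -1` modulo `4p - 1`
  have key : J(4 | 4 * p - 1) * J(-p | 4 * p - 1) = J(-1 | 4 * p - 1) := by
    rw [← jacobiSym.mul_left]
    exact jacobiSym.mod_left' (Int.modEq_iff_dvd.mpr ⟨1, by omega⟩)
  rwa [jacobiSym.at_four hn, one_mul, jacobiSym.at_neg_one hn,
    ZMod.χ₄_nat_three_mod_four (by omega)] at key

lemma Nat.Prime.exists_dvd_sq_sub_of_jacobiSym_eq_one {P : ℕ} (hP : P.Prime) {a : ℤ}
    (h : J(a | P) = 1) : ∃ z : ℤ, (P : ℤ) ∣ z ^ 2 - a := by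
  have := Fact.mk hP
  obtain ⟨c, hc⟩ := ZMod.isSquare_of_jacobiSym_eq_one h
  refine ⟨c.val, (ZMod.intCast_zmod_eq_zero_iff_dvd _ P).mp ?_⟩
  push_cast [ZMod.natCast_zmod_val, hc]
  ring

lemma exists_prime_add_mul_dvd_add_sq {p t x : ℕ} (hp : 0 < p) (hx : x.Coprime (4 * p))
    (hxt : x ≡ t [MOD p]) (hJ : J(-p | x) = 1) :
    ∃ (k : ℕ) (z : ℤ), (t + k * p).Prime ∧ ((t + k * p : ℕ) : ℤ) ∣ p + z ^ 2 := by
  obtain ⟨k, hk, hkx⟩ := Nat.exists_prime_add_mul_modEq (by omega) (dvd_mul_left p 4) hx hxt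
  have hJk : J(-p | t + k * p) = 1 := by
    rw [← jacobiSym_eq_of_modEq _ (Nat.odd_of_coprime_four_mul hx) (by simpa using hkx.symm), hJ]
  obtain ⟨z, hz⟩ := hk.exists_dvd_sq_sub_of_jacobiSym_eq_one hJk
  exact ⟨k, z, hk, by simpa [add_comm] using hz⟩

theorem condition_three_satisfiable_general (p q r s : ℕ)
    (hp : 0 < p)
    (h : (p : ℤ) * s - q * r = 1) :
    ∃ (k : ℕ) (z ε : ℤ), (ε = 1 ∨ ε = -1) ∧
      ((Nat.Prime (q + k * p) ∧ ((q + k * p : ℕ) : ℤ) ∣ (p : ℤ) - ε * z ^ 2) ∨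
       (Nat.Prime (r + k * p) ∧ ((r + k * p : ℕ) : ℤ) ∣ (p : ℤ) - ε * z ^ 2)) := by
  have hqr : p ∣ q * r + 1 := ⟨s, by zify; linear_combination -h⟩
  obtain ⟨c, hcq, hc⟩ := Nat.exists_modEq_coprime_four_mul (Nat.coprime_of_dvd_mul_add_one hqr)
  have : NeZero (4 * p) := ⟨by omega⟩
  obtain ⟨b, hbc⟩ := Nat.exists_dvd_mul_add_one hc
  have hb : b.Coprime (4 * p) := Nat.coprime_of_dvd_mul_add_one hbc
  have hbr : b ≡ r [MOD p] := Nat.modEq_of_dvd_mul_add_one (dvd_of_mul_left_dvd hbc) hqr hcq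
  have hJ : J(-p | b) * J(-p | c) = -1 := by
    rw [← jacobiSym.mul_right' _ (Nat.odd_of_coprime_four_mul hb).pos.ne'
      (Nat.odd_of_coprime_four_mul hc).pos.ne']
    exact jacobiSym_neg_eq_neg_one_of_dvd_add_one hp hbc
  rcases Int.mul_eq_neg_one_iff_eq_one_or_neg_one.mp hJ with ⟨hJb, -⟩ | ⟨-, hJc⟩
  · obtain ⟨k, z, hk, hdvd⟩ := exists_prime_add_mul_dvd_add_sq hp hb hbr hJb
    exact ⟨k, z, -1, Or.inr rfl, Or.inr ⟨hk, by simpa using hdvd⟩⟩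
  · obtain ⟨k, z, hk, hdvd⟩ := exists_prime_add_mul_dvd_add_sq hp hc hcq hJc
    exact ⟨k, z, -1, Or.inr rfl, Or.inl ⟨hk, by simpa using hdvd⟩⟩

/-- Condition (3) of the paper with `w = 1`: there are `k`, `z`, `ε = ±1` such that
`q + k p` or `r + k p` is prime and divides `p − ε z²`. -/
theorem condition_three_satisfiable (p q r s : ℕ)
    (hp : 0 < p) (hq : 0 < q) (hr : 0 < r) (hs : 0 < s)
    (h : (p : ℤ) * s - q * r = 1) :
    ∃ (k : ℕ) (z ε : ℤ), (ε = 1 ∨ ε = -1) ∧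
      ((Nat.Prime (q + k * p) ∧ ((q + k * p : ℕ) : ℤ) ∣ (p : ℤ) - ε * z ^ 2) ∨
       (Nat.Prime (r + k * p) ∧ ((r + k * p : ℕ) : ℤ) ∣ (p : ℤ) - ε * z ^ 2)) :=
  condition_three_satisfiable_general p q r s hp h
end
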